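/- arXiv:2408.14670 — 2 statements merged into one kernel-verified Lean document; each statement's English description precedes it below -/
import Mathlib

section
/- Let W be a finite nonempty set of distinct natural numbers each less than 2^N. Suppose P is a finite set of primes such that the number of primes in P exceeds |W|·(|W|−1)/2 · N. Then there exists p ∈ P such that v ↦ v mod p is injective on W. -/
theorem good_prime_exists (N : ℕ) (W : Finset ℕ) (hne : W.Nonempty)
    (hW : ∀ v ∈ W, v < 2 ^ N) (P : Finset ℕ) (hP : ∀ p ∈ P, p.Prime)
    (hcard : W.card * (W.card - 1) / 2 * N < P.card) :
    ∃ p ∈ P, Set.InjOn (fun v => v % p) (W : Set ℕ) := by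
  classical
  set n := W.card with hn
  set S : Finset (ℕ × ℕ) := W.offDiag.filter (fun q => q.1 < q.2) with hSdef
  set T : Finset (ℕ × ℕ) := W.offDiag.filter (fun q => ¬ q.1 < q.2) with hTdef
  have hST : S.card = T.card := by
    apply Finset.card_bij (fun q _ => (q.2, q.1))
    · rintro ⟨a, b⟩ hq
      simp only [hSdef, hTdef, Finset.mem_filter, Finset.mem_offDiag] at hq ⊢
      refine ⟨⟨hq.1.2.1, hq.1.1, ?_⟩, ?_⟩ <;> omega
    · rintro ⟨a, b⟩ h1 ⟨c, d⟩ h2 h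
      simp only [Prod.mk.injEq] at h
      simp [h.1, h.2]
    · rintro ⟨a, b⟩ hq
      refine ⟨(b, a), ?_, rfl⟩
      simp only [hSdef, hTdef, Finset.mem_filter, Finset.mem_offDiag] at hq ⊢
      refine ⟨⟨hq.1.2.1, hq.1.1, ?_⟩, ?_⟩ <;> omega
  have hsplit : S.card + T.card = W.offDiag.card :=
    Finset.card_filter_add_card_filter_not _
  have hoff : W.offDiag.card = n * (n - 1) := by
    rw [Finset.offDiag_card, ← hn, ← Nat.mul_pred]; rfl
  have hScard : S.card ≤ n * (n - 1) / 2 := by omega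
  set B : Finset ℕ := S.biUnion (fun q => (q.2 - q.1).primeFactors) with hBdef
  have hBcard : B.card ≤ S.card * N := by
    apply Finset.card_biUnion_le_card_mul
    rintro ⟨a, b⟩ hq
    simp only [hSdef, Finset.mem_filter, Finset.mem_offDiag] at hq
    obtain ⟨⟨ha, hb, _⟩, hab⟩ := hq
    set m := b - a with hm
    have hm0 : m ≠ 0 := by omega
    have hmN : m < 2 ^ N := lt_of_le_of_lt (Nat.sub_le _ _) (hW b hb)
    have h2 : 2 ^ m.primeFactors.card ≤ m := by
      calc 2 ^ m.primeFactors.card ≤ ∏ p ∈ m.primeFactors, p := by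
            apply Finset.pow_card_le_prod
            intro p hp
            exact (Nat.prime_of_mem_primeFactors hp).two_le
        _ ≤ m := Nat.le_of_dvd (Nat.pos_of_ne_zero hm0) (Nat.prod_primeFactors_dvd m)
    have := lt_of_le_of_lt h2 hmN
    have := Nat.pow_lt_pow_iff_right (a := 2) (by norm_num) |>.mp this
    omega
  have hBP : B.card < P.card := by
    calc B.card ≤ S.card * N := hBcard
      _ ≤ n * (n - 1) / 2 * N := Nat.mul_le_mul_right _ hScard
      _ < P.card := hcard
  have : ¬ P ⊆ B := fun hsub => absurd (Finset.card_le_card hsub) (by omega)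
  obtain ⟨p, hpP, hpB⟩ := Finset.not_subset.mp this
  refine ⟨p, hpP, ?_⟩
  intro a ha b hb hmod
  simp only [Finset.mem_coe] at ha hb
  by_contra hne'
  -- wlog a < b
  have key : ∀ x y, x ∈ W → y ∈ W → x < y → x % p = y % p → False := by
    intro x y hx hy hxy hxy2
    have hdvd : p ∣ y - x := (Nat.modEq_iff_dvd' hxy.le).mp hxy2
    have hmem : p ∈ (y - x).primeFactors := by
      rw [Nat.mem_primeFactors]
      exact ⟨hP p hpP, hdvd, by omega⟩
    apply hpB
    rw [hBdef, Finset.mem_biUnion]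
    exact ⟨(x, y), by simp [hSdef, Finset.mem_filter, Finset.mem_offDiag, hx, hy, hxy, hxy.ne], hmem⟩
  rcases lt_or_gt_of_ne hne' with h | h
  · exact key a b ha hb h hmod
  · exact key b a hb ha h hmod.symm
end

section
/- Let k, c be fixed and let N = n^c. If d is a constant large enough that the number of primes with at most d·log₂ n bits exceeds (N+1)^{4k} · N, then for every w ∈ {0,1}^N there exists a prime p < 2^{d·log₂ n} such that v ↦ v mod p is injective on the Hamming ball {v ∈ {0,1}^N : hamdist(w, v) ≤ 2k} (strings identified with numbers below 2^N). -/
def hamdist {n : ℕ} (x y : Fin n → Bool) : ℕ :=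
  (Finset.univ.filter fun i => x i ≠ y i).card

def encode {n : ℕ} (v : Fin n → Bool) : ℕ :=
  ∑ i : Fin n, if v i then 2 ^ (i : ℕ) else 0

open Finset

lemma encode_succ {N : ℕ} (v : Fin (N + 1) → Bool) :
    encode v = (if v 0 then 1 else 0) + 2 * encode (fun i : Fin N => v i.succ) := by
  unfold encode
  rw [Fin.sum_univ_succ, Finset.mul_sum]
  congr 1
  exact Finset.sum_congr rfl fun i _ => by
    rcases h : v i.succ <;> simp [h, pow_succ, mul_comm]

lemma encode_injective {N : ℕ} : Function.Injective (encode (n := N)) := by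
  induction N with
  | zero => intro u v _; funext i; exact absurd i.2 (by omega)
  | succ N ih =>
    intro u v h
    rw [encode_succ, encode_succ] at h
    have h0 : u 0 = v 0 := by
      rcases hu : u 0 <;> rcases hv : v 0 <;> simp [hu, hv] at h ⊢ <;> omega
    have htail : (fun i : Fin N => u i.succ) = fun i : Fin N => v i.succ := by
      apply ih
      rcases hu : u 0 <;> simp [hu, h0 ▸ hu] at h <;> omega
    funext i
    refine Fin.cases ?_ ?_ i
    · exact h0
    · intro j; exact congrFun htail j

lemma encode_lt {N : ℕ} (v : Fin N → Bool) : encode v < 2 ^ N := by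
  induction N with
  | zero => simp [encode]
  | succ N ih =>
    rw [encode_succ]
    have := ih (fun i : Fin N => v i.succ)
    split <;> [skip; skip] <;> (rw [pow_succ]; omega)

lemma primeFactors_card_le {m N : ℕ} (h : m < 2 ^ N) : m.primeFactors.card ≤ N := by
  rcases Nat.eq_zero_or_pos m with rfl | hm
  · simp
  have h1 : (2 : ℕ) ^ m.primeFactors.card ≤ ∏ p ∈ m.primeFactors, p :=
    Finset.pow_card_le_prod _ _ _ fun p hp => (Nat.prime_of_mem_primeFactors hp).two_le
  have h2 : ∏ p ∈ m.primeFactors, p ≤ m :=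
    Nat.le_of_dvd hm (Nat.prod_primeFactors_dvd m)
  have : (2:ℕ) ^ m.primeFactors.card < 2 ^ N := lt_of_le_of_lt (h1.trans h2) h
  exact Nat.le_of_lt_succ (Nat.lt_succ_of_lt ((Nat.pow_lt_pow_iff_right (by norm_num)).mp this))

lemma subsets_card_le (N k : ℕ) :
    ((univ : Finset (Finset (Fin N))).filter fun S => S.card ≤ k).card ≤ (N + 1) ^ k := by
  induction k with
  | zero =>
    have hsub : ((univ : Finset (Finset (Fin N))).filter fun S => S.card ≤ 0) ⊆ {∅} := by
      intro S hS
      simp only [mem_filter, Nat.le_zero, Finset.card_eq_zero] at hS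
      simp [hS.2]
    simpa using Finset.card_le_card hsub
  | succ k ih =>
    set f : Finset (Fin N) → Fin (N + 1) × Finset (Fin N) := fun S =>
      if h : S.Nonempty then ((S.max' h).castSucc, S.erase (S.max' h))
      else (Fin.last N, ∅) with hf
    have hmaps : ∀ S ∈ (univ : Finset (Finset (Fin N))).filter fun S => S.card ≤ k + 1,
        f S ∈ (univ : Finset (Fin (N + 1))) ×ˢ
          ((univ : Finset (Finset (Fin N))).filter fun S => S.card ≤ k) := by
      intro S hS
      simp only [mem_filter, mem_univ, true_and] at hS
      by_cases h : S.Nonempty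
      · simp only [hf, dif_pos h, Finset.mem_product, mem_univ, true_and, mem_filter]
        rw [Finset.card_erase_of_mem (S.max'_mem h)]
        omega
      · simp [hf, dif_neg h]
    have hinj : Set.InjOn f ((univ : Finset (Finset (Fin N))).filter fun S => S.card ≤ k + 1) := by
      intro S₁ h₁ S₂ h₂ heq
      by_cases hn₁ : S₁.Nonempty <;> by_cases hn₂ : S₂.Nonempty
      · simp only [hf, dif_pos hn₁, dif_pos hn₂, Prod.mk.injEq] at heq
        have hmax : S₁.max' hn₁ = S₂.max' hn₂ := Fin.castSucc_injective _ heq.1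
        have h2 : S₁.erase (S₂.max' hn₂) = S₂.erase (S₂.max' hn₂) := hmax ▸ heq.2
        calc S₁ = insert (S₂.max' hn₂) (S₁.erase (S₂.max' hn₂)) :=
              (Finset.insert_erase (hmax ▸ S₁.max'_mem hn₁)).symm
          _ = insert (S₂.max' hn₂) (S₂.erase (S₂.max' hn₂)) := by rw [h2]
          _ = S₂ := Finset.insert_erase (S₂.max'_mem hn₂)
      · simp only [hf, dif_pos hn₁, dif_neg hn₂, Prod.mk.injEq] at heq
        exact absurd heq.1 (Fin.castSucc_lt_last _).ne
      · simp only [hf, dif_neg hn₁, dif_pos hn₂, Prod.mk.injEq] at heq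
        exact absurd heq.1.symm (Fin.castSucc_lt_last _).ne
      · rw [Finset.not_nonempty_iff_eq_empty] at hn₁ hn₂
        rw [hn₁, hn₂]
    calc ((univ : Finset (Finset (Fin N))).filter fun S => S.card ≤ k + 1).card
        ≤ ((univ : Finset (Fin (N + 1))) ×ˢ
            ((univ : Finset (Finset (Fin N))).filter fun S => S.card ≤ k)).card :=
          Finset.card_le_card_of_injOn f hmaps hinj
      _ = (N + 1) * ((univ : Finset (Finset (Fin N))).filter fun S => S.card ≤ k).card := by
          rw [Finset.card_product, card_univ, Fintype.card_fin]
      _ ≤ (N + 1) * (N + 1) ^ k := Nat.mul_le_mul_left _ ih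
      _ = (N + 1) ^ (k + 1) := by ring

lemma ball_card_le (N k : ℕ) (w : Fin N → Bool) :
    ((univ : Finset (Fin N → Bool)).filter fun v => hamdist w v ≤ k).card ≤ (N + 1) ^ k := by
  set D : (Fin N → Bool) → Finset (Fin N) := fun v => univ.filter fun i => w i ≠ v i with hD
  have hmaps : ∀ v ∈ (univ : Finset (Fin N → Bool)).filter fun v => hamdist w v ≤ k,
      D v ∈ (univ : Finset (Finset (Fin N))).filter fun S => S.card ≤ k := by
    intro v hv
    simp only [mem_filter, mem_univ, true_and] at hv ⊢
    exact hv
  have hinj : Set.InjOn D ((univ : Finset (Fin N → Bool)).filter fun v => hamdist w v ≤ k) := by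
    intro u _ v _ heq
    funext i
    have : (i ∈ D u) = (i ∈ D v) := by rw [heq]
    simp only [hD, mem_filter, mem_univ, true_and, eq_iff_iff] at this
    rcases hu : u i <;> rcases hv : v i <;> rcases hw : w i <;>
      simp [hu, hv, hw] at this ⊢
  exact (Finset.card_le_card_of_injOn D hmaps hinj).trans (subsets_card_le N k)

theorem good_prime_for_ball (k c n d : ℕ)
    (hd : (n ^ c + 1) ^ (4 * k) * n ^ c <
      ((Finset.range (2 ^ (d * Nat.log 2 n))).filter Nat.Prime).card) :
    ∀ w : Fin (n ^ c) → Bool,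
      ∃ p : ℕ, p.Prime ∧ p < 2 ^ (d * Nat.log 2 n) ∧
        Set.InjOn (fun v => encode v % p)
          {v : Fin (n ^ c) → Bool | hamdist w v ≤ 2 * k} := by
  classical
  set N := n ^ c with hN
  set M := 2 ^ (d * Nat.log 2 n) with hM
  set P := (Finset.range M).filter Nat.Prime with hP
  intro w
  set B := (univ : Finset (Fin N → Bool)).filter fun v => hamdist w v ≤ 2 * k with hB
  set Bad := P.filter fun p => ¬ Set.InjOn (fun v => encode v % p)
      {v : Fin N → Bool | hamdist w v ≤ 2 * k} with hBad
  have hsub : Bad ⊆ (B ×ˢ B).biUnion fun uv => (encode uv.1 - encode uv.2).primeFactors := by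
    intro p hp
    simp only [hBad, mem_filter] at hp
    obtain ⟨hpP, hninj⟩ := hp
    rw [Set.InjOn] at hninj
    push_neg at hninj
    obtain ⟨u, hu, v, hv, heq, hne⟩ := hninj
    simp only [Set.mem_setOf_eq] at hu hv
    have hprime : p.Prime := (Finset.mem_filter.mp hpP).2
    have hEne : encode u ≠ encode v := fun h => hne (encode_injective h)
    have huB : u ∈ B := by simp [hB, hu]
    have hvB : v ∈ B := by simp [hB, hv]
    rcases lt_or_gt_of_ne hEne with hlt | hlt
    · refine Finset.mem_biUnion.mpr ⟨(v, u), Finset.mem_product.mpr ⟨hvB, huB⟩, ?_⟩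
      rw [Nat.mem_primeFactors]
      exact ⟨hprime, Nat.dvd_of_mod_eq_zero (Nat.sub_mod_eq_zero_of_mod_eq heq.symm),
        Nat.sub_ne_zero_of_lt hlt⟩
    · refine Finset.mem_biUnion.mpr ⟨(u, v), Finset.mem_product.mpr ⟨huB, hvB⟩, ?_⟩
      rw [Nat.mem_primeFactors]
      exact ⟨hprime, Nat.dvd_of_mod_eq_zero (Nat.sub_mod_eq_zero_of_mod_eq heq),
        Nat.sub_ne_zero_of_lt hlt⟩
  have hBcard : B.card ≤ (N + 1) ^ (2 * k) := ball_card_le N (2 * k) w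
  have hcard : Bad.card ≤ (N + 1) ^ (4 * k) * N := by
    calc Bad.card ≤ ((B ×ˢ B).biUnion fun uv =>
            (encode uv.1 - encode uv.2).primeFactors).card := Finset.card_le_card hsub
      _ ≤ ∑ uv ∈ B ×ˢ B, ((encode uv.1 - encode uv.2).primeFactors).card :=
          Finset.card_biUnion_le
      _ ≤ ∑ _uv ∈ B ×ˢ B, N := by
          refine Finset.sum_le_sum fun uv _ => primeFactors_card_le ?_
          exact lt_of_le_of_lt (Nat.sub_le _ _) (encode_lt _)
      _ = B.card * B.card * N := by
          rw [Finset.sum_const, Finset.card_product, smul_eq_mul]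
      _ ≤ (N + 1) ^ (2 * k) * (N + 1) ^ (2 * k) * N := by
          exact Nat.mul_le_mul_right _ (Nat.mul_le_mul hBcard hBcard)
      _ = (N + 1) ^ (4 * k) * N := by rw [← pow_add, show 2 * k + 2 * k = 4 * k by ring]
  have hlt : Bad.card < P.card := lt_of_le_of_lt hcard hd
  have hns : ¬ P ⊆ Bad := fun h => absurd (Finset.card_le_card h) (not_le.mpr hlt)
  obtain ⟨p, hpP, hpBad⟩ := Finset.not_subset.mp hns
  have hp1 := Finset.mem_filter.mp hpP
  refine ⟨p, hp1.2, Finset.mem_range.mp hp1.1, ?_⟩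
  by_contra hni
  exact hpBad (Finset.mem_filter.mpr ⟨hpP, hni⟩)
end
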